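/- Given a commutative diagram of short exact sequences of C*-algebras with vertical maps f : A' → A, g : B' → B, h : C' → C connecting 0 → A' → B' → C' → 0 to 0 → A → B → C → 0, the induced sequence of mapping cones 0 → Cf → Cg → Ch → 0 is short exact. -/

import Mathlib

/-!
STATEMENT 3: Given a commutative diagram of short exact sequences of
C*-algebras with vertical maps `f : A' → A`, `g : B' → B`, `h : C' → C`
connecting `0 → A' → B' → C' → 0` to `0 → A → B → C → 0`, the induced sequence
of mapping cones `0 → Cf → Cg → Ch → 0` is short exact.  Here
`Cf = {(a', φ) ∈ A' ⊕ C([0,1], A) : φ 1 = 0, f a' = φ 0}`, and the maps between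
the mapping cones are induced componentwise by the horizontal maps.
-/

open unitInterval
open scoped CStarAlgebra

variable {A B C A' B' C' : Type*}
  [NonUnitalCStarAlgebra A] [NonUnitalCStarAlgebra B] [NonUnitalCStarAlgebra C]
  [NonUnitalCStarAlgebra A'] [NonUnitalCStarAlgebra B'] [NonUnitalCStarAlgebra C']

/-- The mapping cone of `f : A' → A`, as a subset of `A' × C([0,1], A)`:
pairs `(a', φ)` with `φ 1 = 0` and `f a' = φ 0`. -/
def mappingConeSet {A A' : Type*} [NonUnitalCStarAlgebra A] [NonUnitalCStarAlgebra A']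
    (f : A' →⋆ₙₐ[ℂ] A) : Set (A' × C(unitInterval, A)) :=
  {p | p.2 1 = 0 ∧ f p.1 = p.2 0}

/-- The map `Cf → Cg` induced componentwise by `iA' : A' → B'` and `iA : A → B`. -/
def mappingConeMap {A A' B B' : Type*} [NonUnitalCStarAlgebra A] [NonUnitalCStarAlgebra A']
    [NonUnitalCStarAlgebra B] [NonUnitalCStarAlgebra B']
    (iA' : A' →⋆ₙₐ[ℂ] B') (iA : A →⋆ₙₐ[ℂ] B) :
    A' × C(unitInterval, A) → B' × C(unitInterval, B) :=
  fun p => (iA' p.1, ContinuousMap.comp ⟨⇑iA, map_continuous iA⟩ p.2)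

/-!
The only substantial step is that `Cg → Ch` is onto, i.e. that a path in `C` lifts to a
continuous path in `B` with prescribed endpoints. Composition with `qB` maps `C(I, B)` onto a
dense subspace of `C(I, C)` (glue pointwise lifts with a partition of unity), and every element of
the range has a preimage of controlled norm (translate the norm-controlled pointwise lifts given by
the open mapping theorem along a given preimage). Since `C(I, B)` is complete, a dense range with
controlled preimages is everything. A straight-line correction with values in `ker qB` then fixes
the endpoints. Exactness in the middle holds because an injective *-homomorphism is isometric, so
a path in `B` with values in the image of `A` is a continuous path in `A`.
-/

namespace ContinuousLinearMap

variable {X E F : Type*} [TopologicalSpace X] [CompactSpace X] [T2Space X]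
  [NormedAddCommGroup E] [NormedSpace ℝ E] [NormedAddCommGroup F] [NormedSpace ℝ F]

theorem denseRange_compLeftContinuous {T : E →L[ℝ] F} (hT : Function.Surjective T) :
    DenseRange (T.compLeftContinuous ℝ X) := by
  refine Metric.denseRange_iff.mpr fun ψ ε hε => ?_
  obtain ⟨φ, hφ⟩ := exists_continuous_forall_mem_convex_of_local_const
    (t := fun x => T ⁻¹' Metric.ball (ψ x) (ε / 2))
    (fun x => (convex_ball _ _).linear_preimage (T : E →ₗ[ℝ] F)) fun x => by
      obtain ⟨e, he⟩ := hT (ψ x)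
      refine ⟨e, ?_⟩
      filter_upwards [ψ.continuous.continuousAt (Metric.ball_mem_nhds (ψ x) (half_pos hε))]
        with y hy
      rw [Set.mem_preimage, he, Metric.mem_ball, dist_comm]
      exact hy
  refine ⟨φ, lt_of_le_of_lt ((ContinuousMap.dist_le (half_pos hε).le).mpr fun x => ?_)
    (half_lt_self hε)⟩
  rw [dist_comm]
  exact (hφ x).le

theorem exists_preimage_norm_le_compLeftContinuous [CompleteSpace E] [CompleteSpace F] {T : E →L[ℝ] F}
    (hT : Function.Surjective T) : ∃ C > 0, ∀ ψ ∈ Set.range (T.compLeftContinuous ℝ X),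
      ∃ φ : C(X, E), T.compLeftContinuous ℝ X φ = ψ ∧ ‖φ‖ ≤ C * ‖ψ‖ := by
  obtain ⟨M, hM₀, hM⟩ := T.exists_preimage_norm_le hT
  refine ⟨M + 1, by positivity, ?_⟩
  rintro _ ⟨φ₀, rfl⟩
  set ψ := T.compLeftContinuous ℝ X φ₀
  obtain hψ | hψ := (norm_nonneg ψ).eq_or_lt
  · exact ⟨0, by simp [norm_eq_zero.mp hψ.symm], by simp [← hψ]⟩
  obtain ⟨φ, hφ⟩ := exists_continuous_forall_mem_convex_of_local
    (t := fun x => T ⁻¹' {ψ x} ∩ Metric.ball 0 ((M + 1) * ‖ψ‖))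
    (fun x => ((convex_singleton _).linear_preimage (T : E →ₗ[ℝ] F)).inter (convex_ball _ _))
    fun x => by
      -- near `x`, translate a controlled lift of `ψ x` along `φ₀`
      obtain ⟨e, he, hle⟩ := hM (ψ x)
      refine ⟨_, φ₀.continuous.continuousAt (Metric.ball_mem_nhds (φ₀ x) hψ),
        fun y => e + (φ₀ y - φ₀ x), by fun_prop, fun y hy => ⟨?_, ?_⟩⟩
      · rw [Set.mem_preimage, Set.mem_singleton_iff, map_add, map_sub, he]
        exact add_sub_cancel _ _
      · rw [mem_ball_zero_iff]
        calc ‖e + (φ₀ y - φ₀ x)‖ ≤ ‖e‖ + ‖φ₀ y - φ₀ x‖ := norm_add_le _ _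
          _ < M * ‖ψ‖ + ‖ψ‖ := add_lt_add_of_le_of_lt
              (hle.trans (mul_le_mul_of_nonneg_left (ψ.norm_coe_le_norm x) hM₀.le))
              (mem_ball_iff_norm.mp hy)
          _ = (M + 1) * ‖ψ‖ := by ring
  refine ⟨φ, ContinuousMap.ext fun x => ((hφ x).1 : T (φ x) = ψ x), ?_⟩
  exact (φ.norm_le (by positivity)).mpr fun x => (mem_ball_zero_iff.mp (hφ x).2).le

theorem surjective_compLeftContinuous [CompleteSpace E] [CompleteSpace F] {T : E →L[ℝ] F}
    (hT : Function.Surjective T) : Function.Surjective (T.compLeftContinuous ℝ X) := by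
  set Tc := T.compLeftContinuous ℝ X
  let Tc' := (Tc : C(X, E) →+ C(X, F)).mkNormedAddGroupHom ‖Tc‖ Tc.le_opNorm
  obtain ⟨C, hC, hlift⟩ := exists_preimage_norm_le_compLeftContinuous (X := X) hT
  have hclosure := controlled_closure_of_complete (f := Tc') (K := Tc'.range) hC one_pos hlift
  intro ψ
  obtain ⟨φ, hφ, -⟩ := hclosure ψ (denseRange_compLeftContinuous hT ψ)
  exact ⟨φ, hφ⟩

theorem exists_lift_unitInterval_of_endpoints [CompleteSpace E] [CompleteSpace F]
    {T : E →L[ℝ] F} (hT : Function.Surjective T) (ψ : C(I, F)) {a b : E}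
    (ha : T a = ψ 0) (hb : T b = ψ 1) :
    ∃ φ : C(I, E), (∀ t, T (φ t) = ψ t) ∧ φ 0 = a ∧ φ 1 = b := by
  obtain ⟨φ₀, hφ₀⟩ := surjective_compLeftContinuous hT ψ
  have hlift (t : I) : T (φ₀ t) = ψ t := DFunLike.congr_fun hφ₀ t
  -- subtract the straight path between the endpoint errors, which lies in `ker T`
  refine ⟨⟨fun t => φ₀ t - ((1 - (t : ℝ)) • (φ₀ 0 - a) + (t : ℝ) • (φ₀ 1 - b)), by fun_prop⟩,
    fun t => ?_, by simp, by simp⟩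
  simp [hlift, ha, hb]

end ContinuousLinearMap

theorem Topology.IsEmbedding.exists_continuousMap_comp_eq {X Y Z : Type*} [TopologicalSpace X]
    [TopologicalSpace Y] [TopologicalSpace Z] {e : Y → Z} (he : IsEmbedding e) (φ : C(X, Z))
    (hφ : ∀ x, φ x ∈ Set.range e) : ∃ ξ : C(X, Y), ∀ x, e (ξ x) = φ x := by
  choose ξ hξ using hφ
  have hcomp : e ∘ ξ = φ := funext hξ
  exact ⟨⟨ξ, he.continuous_iff.mpr (hcomp ▸ φ.continuous)⟩, hξ⟩

section MappingCone

variable {iA : A →⋆ₙₐ[ℂ] B} {qB : B →⋆ₙₐ[ℂ] C} {iA' : A' →⋆ₙₐ[ℂ] B'} {qB' : B' →⋆ₙₐ[ℂ] C'}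
  {f : A' →⋆ₙₐ[ℂ] A} {g : B' →⋆ₙₐ[ℂ] B} {h : C' →⋆ₙₐ[ℂ] C}

@[simp]
theorem mappingConeMap_fst (p : A' × C(I, A)) : (mappingConeMap iA' iA p).1 = iA' p.1 := rfl

@[simp]
theorem mappingConeMap_snd_apply (p : A' × C(I, A)) (t : I) :
    (mappingConeMap iA' iA p).2 t = iA (p.2 t) := rfl

theorem mappingConeMap_mem_mappingConeSet (hcomm : ∀ a, g (iA' a) = iA (f a))
    {p : A' × C(I, A)} (hp : p ∈ mappingConeSet f) : mappingConeMap iA' iA p ∈ mappingConeSet g :=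
  ⟨by simp [hp.1], by simp [hcomm, hp.2]⟩

theorem mappingConeMap_injective (hiA' : Function.Injective iA') (hiA : Function.Injective iA) :
    Function.Injective (mappingConeMap iA' iA) := fun _ _ hpq =>
  Prod.ext (hiA' congr($hpq.1)) (ContinuousMap.ext fun t => hiA congr($hpq.2 t))

theorem mappingConeMap_surjOn (hqB : Function.Surjective qB) (hqB' : Function.Surjective qB')
    (hcomm : ∀ b, h (qB' b) = qB (g b)) :
    Set.SurjOn (mappingConeMap qB' qB) (mappingConeSet g) (mappingConeSet h) := by
  rintro ⟨c', ψ⟩ ⟨hψ1, hψ0⟩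
  obtain ⟨b', rfl⟩ := hqB' c'
  let qBℝ : B →L[ℝ] C := ⟨(qB : B →ₗ[ℂ] C).restrictScalars ℝ, map_continuous qB⟩
  obtain ⟨φ, hφ, hφ0, hφ1⟩ := qBℝ.exists_lift_unitInterval_of_endpoints hqB ψ
    (a := g b') (b := 0) ((hcomm b').symm.trans hψ0) (by simp [hψ1])
  exact ⟨(b', φ), ⟨hφ1, hφ0.symm⟩, Prod.ext rfl (ContinuousMap.ext hφ)⟩

theorem mappingConeMap_ker_eq_image (hiA : Function.Injective iA)
    (hexact : ∀ b, qB b = 0 ↔ b ∈ Set.range iA) (hexact' : ∀ b, qB' b = 0 ↔ b ∈ Set.range iA')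
    (hcomm : ∀ a, g (iA' a) = iA (f a)) :
    {p ∈ mappingConeSet g | mappingConeMap qB' qB p = 0} =
      mappingConeMap iA' iA '' mappingConeSet f := by
  refine Set.Subset.antisymm ?_ ?_
  · rintro ⟨b', φ⟩ ⟨⟨hφ1, hφ0⟩, hzero⟩
    obtain ⟨a', rfl⟩ := (hexact' b').mp congr($hzero.1)
    obtain ⟨ξ, hξ⟩ := (NonUnitalStarAlgHom.isometry iA hiA).isEmbedding.exists_continuousMap_comp_eq
      φ fun t => (hexact _).mp congr($hzero.2 t)
    refine ⟨(a', ξ), ⟨hiA ?_, hiA ?_⟩, Prod.ext rfl (ContinuousMap.ext hξ)⟩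
    · rw [hξ, map_zero]; exact hφ1
    · rw [hξ, ← hcomm]; exact hφ0
  · rintro _ ⟨p, hp, rfl⟩
    refine ⟨mappingConeMap_mem_mappingConeSet hcomm hp, Prod.ext ?_ (ContinuousMap.ext fun t => ?_)⟩
    · exact (hexact' _).mpr ⟨_, rfl⟩
    · exact (hexact _).mpr ⟨_, rfl⟩

end MappingCone

theorem mappingCone_sequence_exact
    (iA : A →⋆ₙₐ[ℂ] B) (qB : B →⋆ₙₐ[ℂ] C) (iA' : A' →⋆ₙₐ[ℂ] B') (qB' : B' →⋆ₙₐ[ℂ] C')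
    (f : A' →⋆ₙₐ[ℂ] A) (g : B' →⋆ₙₐ[ℂ] B) (h : C' →⋆ₙₐ[ℂ] C)
    -- the top row is short exact
    (hiA : Function.Injective iA) (hqB : Function.Surjective qB)
    (hexact : ∀ b : B, qB b = 0 ↔ b ∈ Set.range iA)
    -- the bottom row is short exact
    (hiA' : Function.Injective iA') (hqB' : Function.Surjective qB')
    (hexact' : ∀ b : B', qB' b = 0 ↔ b ∈ Set.range iA')
    -- the diagram commutes
    (hcomm₁ : ∀ a : A', g (iA' a) = iA (f a))
    (hcomm₂ : ∀ b : B', h (qB' b) = qB (g b)) :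
    -- the induced maps take `Cf` into `Cg` and `Cg` into `Ch`
    (∀ p ∈ mappingConeSet f, mappingConeMap iA' iA p ∈ mappingConeSet g) ∧
    (∀ p ∈ mappingConeSet g, mappingConeMap qB' qB p ∈ mappingConeSet h) ∧
    -- injectivity of `Cf → Cg`
    Set.InjOn (mappingConeMap iA' iA) (mappingConeSet f) ∧
    -- surjectivity of `Cg → Ch`
    (∀ r ∈ mappingConeSet h, ∃ p ∈ mappingConeSet g, mappingConeMap qB' qB p = r) ∧
    -- exactness in the middle
    ({p ∈ mappingConeSet g | mappingConeMap qB' qB p = 0} =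
      mappingConeMap iA' iA '' mappingConeSet f) := by
  exact ⟨fun _ => mappingConeMap_mem_mappingConeSet hcomm₁,
    fun _ => mappingConeMap_mem_mappingConeSet hcomm₂,
    (mappingConeMap_injective hiA' hiA).injOn,
    fun _ hr => mappingConeMap_surjOn hqB hqB' hcomm₂ hr,
    mappingConeMap_ker_eq_image hiA hexact hexact' hcomm₁⟩
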